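/- If the data is of Heisenberg type, then the Folland–Kaplan gauge N is ∞-harmonic away from the origin: for every g = (z,t) ≠ (0,0), 𝓛_∞ N(g) = Σ_{i,j} N_{,eᵢeⱼ}(g) X_{eᵢ}N(g) X_{eⱼ}N(g) = 0. -/

import Mathlib

open scoped RealInnerProductSpace
open MeasureTheory

noncomputable section

variable {V₁ V₂ : Type*} [NormedAddCommGroup V₁] [InnerProductSpace ℝ V₁]
  [NormedAddCommGroup V₂] [InnerProductSpace ℝ V₂]

/-- The horizontal derivative of `f : V₁ × V₂ → ℝ` at `g = (z,t)` in the horizontal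
direction `v ∈ V₁`, namely `Df(g)(v, ½[z,v])`. -/
def Xd (b : V₁ →ₗ[ℝ] V₁ →ₗ[ℝ] V₂) (v : V₁) (f : V₁ × V₂ → ℝ) (g : V₁ × V₂) : ℝ :=
  fderiv ℝ f g (v, (2⁻¹ : ℝ) • b g.1 v)

/-- The horizontal gradient: the unique vector of `V₁` representing the linear functional
`v ↦ X_v f (g)` via the inner product of `V₁`. -/
def Xgrad [FiniteDimensional ℝ V₁] [FiniteDimensional ℝ V₂]
    (b : V₁ →ₗ[ℝ] V₁ →ₗ[ℝ] V₂) (f : V₁ × V₂ → ℝ) (g : V₁ × V₂) : V₁ :=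
  (InnerProductSpace.toDual ℝ V₁).symm
    (LinearMap.toContinuousLinearMap
      ((fderiv ℝ f g).toLinearMap.comp
        (LinearMap.prod LinearMap.id ((2⁻¹ : ℝ) • b g.1))))

/-- The symmetrized second horizontal derivative `f_{,uv} = ½(X_u X_v f + X_v X_u f)`. -/
def X2sym (b : V₁ →ₗ[ℝ] V₁ →ₗ[ℝ] V₂) (u v : V₁) (f : V₁ × V₂ → ℝ) (g : V₁ × V₂) : ℝ :=
  (Xd b u (Xd b v f) g + Xd b v (Xd b u f) g) / 2

/-- The horizontal (sub-)Laplacian `𝓛 f = Σᵢ X_{eᵢ} X_{eᵢ} f`. -/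
def hLap [FiniteDimensional ℝ V₁] (b : V₁ →ₗ[ℝ] V₁ →ₗ[ℝ] V₂) (f : V₁ × V₂ → ℝ)
    (g : V₁ × V₂) : ℝ :=
  ∑ i, Xd b (stdOrthonormalBasis ℝ V₁ i) (Xd b (stdOrthonormalBasis ℝ V₁ i) f) g

/-- The horizontal ∞-Laplacian `𝓛_∞ f = Σ_{i,j} f_{,eᵢeⱼ} X_{eᵢ}f X_{eⱼ}f`. -/
def hInfLap [FiniteDimensional ℝ V₁] (b : V₁ →ₗ[ℝ] V₁ →ₗ[ℝ] V₂) (f : V₁ × V₂ → ℝ)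
    (g : V₁ × V₂) : ℝ :=
  ∑ i, ∑ j, X2sym b (stdOrthonormalBasis ℝ V₁ i) (stdOrthonormalBasis ℝ V₁ j) f g *
    Xd b (stdOrthonormalBasis ℝ V₁ i) f g * Xd b (stdOrthonormalBasis ℝ V₁ j) f g

/-- `ψ(z,t) = |z|²`. -/
def psiF (g : V₁ × V₂) : ℝ := ‖g.1‖ ^ 2

/-- `χ(z,t) = |t|²`. -/
def chiF (g : V₁ × V₂) : ℝ := ‖g.2‖ ^ 2

/-- `a(z,t) = ψ² + 16χ = |z|⁴ + 16|t|²`. -/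
def aF (g : V₁ × V₂) : ℝ := psiF g ^ 2 + 16 * chiF g

/-- The Folland–Kaplan gauge `N = a^{1/4}`. -/
def Ng (g : V₁ × V₂) : ℝ := aF g ^ ((1 : ℝ) / 4)

/-- `A(z,t) = |z|² z + 4 J(t) z`. -/
def Ag (J : V₂ → V₁ →ₗ[ℝ] V₁) (g : V₁ × V₂) : V₁ :=
  ‖g.1‖ ^ 2 • g.1 + (4 : ℝ) • J g.2 g.1

/-- The group law `(z,t)·(z',t') = (z+z', t+t'+½[z,z'])`. -/
def gmul (b : V₁ →ₗ[ℝ] V₁ →ₗ[ℝ] V₂) (g h : V₁ × V₂) : V₁ × V₂ :=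
  (g.1 + h.1, g.2 + h.2 + (2⁻¹ : ℝ) • b g.1 h.1)

/-- The group inverse `(z,t)⁻¹ = (−z,−t)`. -/
def ginv (g : V₁ × V₂) : V₁ × V₂ := (-g.1, -g.2)

end

/-! At `g = (z,t) ≠ 0` one computes `X_v N = a^{-3/4} ⟨A, v⟩` and
`N_{,uv} = -3 a^{-7/4} ⟨A,u⟩⟨A,v⟩ + a^{-3/4} (2⟨z,u⟩⟨z,v⟩ + |z|²⟨u,v⟩ + 2⟨[z,u],[z,v]⟩)`,
the term `4⟨[u,v],t⟩` of `X_u X_v N` cancelling in the symmetrization. Since `N_{,uv}` is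
bilinear, `𝓛_∞ N = a^{-3/2} N_{,AA}`. In the H-type case `⟨z,A⟩ = |z|⁴`, `|A|² = |z|² a` and
`[z,A] = 4|z|² t`, so `N_{,AA} = a^{-3/4} |z|⁴ (-3a + 2|z|⁴ + a + 32|t|²) = 0`. -/

open scoped Topology

section HorizontalCalculus

variable {V₁ V₂ : Type*} [NormedAddCommGroup V₁] [InnerProductSpace ℝ V₁]
  [NormedAddCommGroup V₂] [InnerProductSpace ℝ V₂]
  (b : V₁ →ₗ[ℝ] V₁ →ₗ[ℝ] V₂) (v : V₁) {f h : V₁ × V₂ → ℝ} {g : V₁ × V₂}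

theorem HasFDerivAt.Xd_eq {f' : V₁ × V₂ →L[ℝ] ℝ} (hf : HasFDerivAt f f' g) :
    Xd b v f g = f' (v, (2⁻¹ : ℝ) • b g.1 v) := by
  rw [Xd, hf.fderiv]

theorem Filter.EventuallyEq.Xd_eq (hfh : f =ᶠ[𝓝 g] h) : Xd b v f g = Xd b v h g := by
  rw [Xd, Xd, hfh.fderiv_eq]

theorem Xd_mul (hf : DifferentiableAt ℝ f g) (hh : DifferentiableAt ℝ h g) :
    Xd b v (fun x => f x * h x) g = Xd b v f g * h g + f g * Xd b v h g := by
  rw [HasFDerivAt.Xd_eq b v (f := fun x => f x * h x) (hf.hasFDerivAt.mul hh.hasFDerivAt), Xd, Xd]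
  simp only [add_apply, smul_apply, smul_eq_mul]
  ring

theorem Xd_rpow_const {p : ℝ} (hf : DifferentiableAt ℝ f g) (hf0 : f g ≠ 0) :
    Xd b v (fun x => f x ^ p) g = p * f g ^ (p - 1) * Xd b v f g := by
  rw [(hf.hasFDerivAt.rpow_const (Or.inl hf0)).Xd_eq, Xd]
  simp only [smul_apply, smul_eq_mul]

end HorizontalCalculus

theorem aF_pos {V₁ V₂ : Type*} [NormedAddCommGroup V₁] [NormedAddCommGroup V₂] {g : V₁ × V₂}
    (hg : g ≠ (0, 0)) : 0 < aF g := by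
  obtain ⟨z, t⟩ := g
  have hzt : z ≠ 0 ∨ t ≠ 0 := by
    by_contra! h
    exact hg (Prod.ext h.1 h.2)
  simp only [aF, psiF, chiF]
  rcases hzt with hz | ht
  · have := norm_pos_iff.mpr hz
    positivity
  · have := norm_pos_iff.mpr ht
    positivity

section GaugeDerivatives

variable {V₁ V₂ : Type*} [NormedAddCommGroup V₁] [InnerProductSpace ℝ V₁]
  [NormedAddCommGroup V₂] [InnerProductSpace ℝ V₂]

/-- `⟨A(g), v⟩` with `J(t)` eliminated through `⟨J(t)z, v⟩ = ⟨[z,v], t⟩`, so that it can be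
differentiated in `t` without first proving `J` linear. -/
def innerAg (b : V₁ →ₗ[ℝ] V₁ →ₗ[ℝ] V₂) (v : V₁) (g : V₁ × V₂) : ℝ :=
  ‖g.1‖ ^ 2 * ⟪g.1, v⟫ + 4 * ⟪b g.1 v, g.2⟫

theorem differentiable_aF : Differentiable ℝ (aF : V₁ × V₂ → ℝ) := fun _ =>
  ((differentiableAt_fst.norm_sq ℝ).pow 2).add ((differentiableAt_snd.norm_sq ℝ).const_mul 16)

theorem Xd_aF (b : V₁ →ₗ[ℝ] V₁ →ₗ[ℝ] V₂) (v : V₁) (g : V₁ × V₂) :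
    Xd b v aF g = 4 * innerAg b v g := by
  have hfst := (hasFDerivAt_fst (𝕜 := ℝ) (E := V₁) (F := V₂) (p := g)).norm_sq
  have hsnd := (hasFDerivAt_snd (𝕜 := ℝ) (E := V₁) (F := V₂) (p := g)).norm_sq
  rw [HasFDerivAt.Xd_eq b v (f := aF) ((hfst.pow 2).add (hsnd.const_mul 16))]
  simp only [innerAg, add_apply, smul_apply, ContinuousLinearMap.comp_apply,
    ContinuousLinearMap.coe_fst', ContinuousLinearMap.coe_snd', coe_innerSL_apply, smul_eq_mul,
    nsmul_eq_mul, real_inner_smul_right, real_inner_comm g.2]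
  ring

theorem Xd_Ng (b : V₁ →ₗ[ℝ] V₁ →ₗ[ℝ] V₂) (v : V₁) {g : V₁ × V₂} (hg : g ≠ (0, 0)) :
    Xd b v Ng g = aF g ^ (-(3 : ℝ) / 4) * innerAg b v g := by
  change Xd b v (fun x => aF x ^ ((1 : ℝ) / 4)) g = _
  rw [Xd_rpow_const b v differentiable_aF.differentiableAt (aF_pos hg).ne', Xd_aF]
  norm_num
  ring

variable [FiniteDimensional ℝ V₁]

theorem differentiable_innerAg (b : V₁ →ₗ[ℝ] V₁ →ₗ[ℝ] V₂) (v : V₁) :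
    Differentiable ℝ (innerAg b v) := by
  have hbv : Differentiable ℝ fun g : V₁ × V₂ => b g.1 v :=
    (LinearMap.toContinuousLinearMap (b.flip v)).differentiable.comp differentiable_fst
  exact ((differentiable_fst.norm_sq ℝ).mul (differentiable_fst.inner ℝ (differentiable_const v))).add
    ((hbv.inner ℝ differentiable_snd).const_mul 4)

theorem Xd_innerAg (b : V₁ →ₗ[ℝ] V₁ →ₗ[ℝ] V₂) (u v : V₁) (g : V₁ × V₂) :
    Xd b u (innerAg b v) g = 2 * ⟪g.1, u⟫ * ⟪g.1, v⟫ + ‖g.1‖ ^ 2 * ⟪u, v⟫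
      + 4 * ⟪b u v, g.2⟫ + 2 * ⟪b g.1 v, b g.1 u⟫ := by
  have hfst := hasFDerivAt_fst (𝕜 := ℝ) (E := V₁) (F := V₂) (p := g)
  have hsnd := hasFDerivAt_snd (𝕜 := ℝ) (E := V₁) (F := V₂) (p := g)
  have hbv := (LinearMap.toContinuousLinearMap (b.flip v)).hasFDerivAt.comp g hfst
  rw [HasFDerivAt.Xd_eq b u (f := innerAg b v) ((hfst.norm_sq.mul
    (hfst.inner ℝ (hasFDerivAt_const v g))).add ((hbv.inner ℝ hsnd).const_mul 4))]
  simp only [add_apply, smul_apply, ContinuousLinearMap.comp_apply, ContinuousLinearMap.prod_apply,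
    ContinuousLinearMap.coe_fst', ContinuousLinearMap.coe_snd', LinearMap.coe_toContinuousLinearMap',
    LinearMap.flip_apply, Function.comp_apply, fderivInnerCLM_apply, zero_apply, inner_zero_right, coe_innerSL_apply,
    smul_eq_mul, nsmul_eq_mul, real_inner_smul_right]
  ring

theorem Xd_Xd_Ng (b : V₁ →ₗ[ℝ] V₁ →ₗ[ℝ] V₂) (u v : V₁) {g : V₁ × V₂} (hg : g ≠ (0, 0)) :
    Xd b u (Xd b v Ng) g = -3 * aF g ^ (-(7 : ℝ) / 4) * innerAg b u g * innerAg b v g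
      + aF g ^ (-(3 : ℝ) / 4) * Xd b u (innerAg b v) g := by
  have hXv : Xd b v Ng =ᶠ[𝓝 g] fun x => aF x ^ (-(3 : ℝ) / 4) * innerAg b v x :=
    Filter.eventually_of_mem (isOpen_ne.mem_nhds hg) fun x hx => Xd_Ng b v hx
  have hpow : DifferentiableAt ℝ (fun x => aF x ^ (-(3 : ℝ) / 4)) g :=
    differentiable_aF.differentiableAt.rpow_const (Or.inl (aF_pos hg).ne')
  rw [hXv.Xd_eq, Xd_mul b u hpow (differentiable_innerAg b v).differentiableAt,
    Xd_rpow_const b u differentiable_aF.differentiableAt (aF_pos hg).ne', Xd_aF,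
    show -(3 : ℝ) / 4 - 1 = -(7 : ℝ) / 4 by norm_num]
  ring

end GaugeDerivatives

section HeisenbergType

variable {V₁ V₂ : Type*} [NormedAddCommGroup V₁] [InnerProductSpace ℝ V₁]
  [NormedAddCommGroup V₂] [InnerProductSpace ℝ V₂]
  {b : V₁ →ₗ[ℝ] V₁ →ₗ[ℝ] V₂} {J : V₂ → V₁ →ₗ[ℝ] V₁}

theorem apply_self_eq_zero_of_skew (hskew : ∀ z z' : V₁, b z z' = - b z' z) (z : V₁) :
    b z z = 0 := by
  have h := hskew z z
  rw [eq_neg_iff_add_eq_zero, ← two_smul ℝ] at h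
  exact (smul_eq_zero.mp h).resolve_left two_ne_zero

theorem J_add_apply (hJ : ∀ (t : V₂) (z z' : V₁), ⟪J t z, z'⟫ = ⟪b z z', t⟫) (s s' : V₂) (w : V₁) :
    J (s + s') w = J s w + J s' w :=
  ext_inner_right ℝ fun x => by rw [inner_add_left, hJ, hJ, hJ, inner_add_right]

theorem inner_J_apply_J_apply (hJ : ∀ (t : V₂) (z z' : V₁), ⟪J t z, z'⟫ = ⟪b z z', t⟫)
    (hH : ∀ (t : V₂) (z : V₁), ‖J t z‖ = ‖t‖ * ‖z‖) (s s' : V₂) (w : V₁) :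
    ⟪J s w, J s' w⟫ = ⟪s, s'⟫ * ‖w‖ ^ 2 := by
  have hsum := norm_add_sq_real (J s w) (J s' w)
  rw [← J_add_apply hJ, hH, hH, hH, mul_pow, mul_pow, mul_pow, norm_add_sq_real] at hsum
  linarith

theorem inner_J_apply_self (hskew : ∀ z z' : V₁, b z z' = - b z' z)
    (hJ : ∀ (t : V₂) (z z' : V₁), ⟪J t z, z'⟫ = ⟪b z z', t⟫) (s : V₂) (z : V₁) :
    ⟪J s z, z⟫ = 0 := by
  rw [hJ, apply_self_eq_zero_of_skew hskew, inner_zero_left]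

theorem apply_J_apply_self (hJ : ∀ (t : V₂) (z z' : V₁), ⟪J t z, z'⟫ = ⟪b z z', t⟫)
    (hH : ∀ (t : V₂) (z : V₁), ‖J t z‖ = ‖t‖ * ‖z‖) (s : V₂) (z : V₁) :
    b z (J s z) = ‖z‖ ^ 2 • s :=
  ext_inner_right ℝ fun x => by
    rw [← hJ, inner_J_apply_J_apply hJ hH, real_inner_smul_left, real_inner_comm, mul_comm]

theorem innerAg_eq_inner_Ag (hJ : ∀ (t : V₂) (z z' : V₁), ⟪J t z, z'⟫ = ⟪b z z', t⟫) (v : V₁)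
    (g : V₁ × V₂) : innerAg b v g = ⟪Ag J g, v⟫ := by
  rw [innerAg, Ag, inner_add_left, real_inner_smul_left, real_inner_smul_left, hJ]

theorem inner_fst_Ag (hskew : ∀ z z' : V₁, b z z' = - b z' z)
    (hJ : ∀ (t : V₂) (z z' : V₁), ⟪J t z, z'⟫ = ⟪b z z', t⟫) (g : V₁ × V₂) :
    ⟪g.1, Ag J g⟫ = ‖g.1‖ ^ 4 := by
  rw [Ag, inner_add_right, real_inner_smul_right, real_inner_smul_right, real_inner_self_eq_norm_sq,
    real_inner_comm, inner_J_apply_self hskew hJ]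
  ring

theorem norm_Ag_sq (hskew : ∀ z z' : V₁, b z z' = - b z' z)
    (hJ : ∀ (t : V₂) (z z' : V₁), ⟪J t z, z'⟫ = ⟪b z z', t⟫)
    (hH : ∀ (t : V₂) (z : V₁), ‖J t z‖ = ‖t‖ * ‖z‖) (g : V₁ × V₂) :
    ‖Ag J g‖ ^ 2 = ‖g.1‖ ^ 2 * aF g := by
  rw [Ag, norm_add_sq_real, norm_smul, norm_smul, real_inner_smul_left, real_inner_smul_right,
    real_inner_comm (J g.2 g.1), inner_J_apply_self hskew hJ, hH]
  simp only [aF, psiF, chiF, Real.norm_eq_abs, abs_pow, abs_norm]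
  norm_num
  ring

theorem apply_fst_Ag (hskew : ∀ z z' : V₁, b z z' = - b z' z)
    (hJ : ∀ (t : V₂) (z z' : V₁), ⟪J t z, z'⟫ = ⟪b z z', t⟫)
    (hH : ∀ (t : V₂) (z : V₁), ‖J t z‖ = ‖t‖ * ‖z‖) (g : V₁ × V₂) :
    b g.1 (Ag J g) = (4 * ‖g.1‖ ^ 2) • g.2 := by
  rw [Ag, map_add, map_smul, map_smul, apply_self_eq_zero_of_skew hskew, apply_J_apply_self hJ hH,
    smul_zero, zero_add, smul_smul]

end HeisenbergType

theorem OrthonormalBasis.sum_sum_apply_mul_inner_mul_inner {ι E : Type*} [Fintype ι]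
    [NormedAddCommGroup E] [InnerProductSpace ℝ E] (e : OrthonormalBasis ι ℝ E)
    (B : E →ₗ[ℝ] E →ₗ[ℝ] ℝ) (w : E) :
    ∑ i, ∑ j, B (e i) (e j) * ⟪w, e i⟫ * ⟪w, e j⟫ = B w w := by
  conv_rhs => rw [← e.sum_repr' w]
  simp only [map_sum, map_smul, LinearMap.sum_apply, LinearMap.smul_apply, smul_eq_mul,
    Finset.mul_sum, real_inner_comm w]
  rw [Finset.sum_comm]
  refine Finset.sum_congr rfl fun i _ => Finset.sum_congr rfl fun j _ => ?_
  ring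

section InfinityLaplacian

variable {V₁ V₂ : Type*} [NormedAddCommGroup V₁] [InnerProductSpace ℝ V₁] [FiniteDimensional ℝ V₁]
  [NormedAddCommGroup V₂] [InnerProductSpace ℝ V₂]

theorem hInfLap_eq_apply_of_Xd_eq_inner {b : V₁ →ₗ[ℝ] V₁ →ₗ[ℝ] V₂} {f : V₁ × V₂ → ℝ}
    {g : V₁ × V₂} (B : V₁ →ₗ[ℝ] V₁ →ₗ[ℝ] ℝ) (w : V₁) (hX : ∀ v, Xd b v f g = ⟪w, v⟫)
    (hX2 : ∀ u v, X2sym b u v f g = B u v) : hInfLap b f g = B w w := by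
  simp only [hInfLap, hX, hX2]
  exact (stdOrthonormalBasis ℝ V₁).sum_sum_apply_mul_inner_mul_inner B w

end InfinityLaplacian

section GaugeHessian

variable {V₁ V₂ : Type*} [NormedAddCommGroup V₁] [InnerProductSpace ℝ V₁]
  [NormedAddCommGroup V₂] [InnerProductSpace ℝ V₂]

noncomputable def gaugeHessian (b : V₁ →ₗ[ℝ] V₁ →ₗ[ℝ] V₂) (J : V₂ → V₁ →ₗ[ℝ] V₁) (g : V₁ × V₂) :
    V₁ →ₗ[ℝ] V₁ →ₗ[ℝ] ℝ :=
  LinearMap.mk₂ ℝ (fun u v => -3 * aF g ^ (-(7 : ℝ) / 4) * ⟪Ag J g, u⟫ * ⟪Ag J g, v⟫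
      + aF g ^ (-(3 : ℝ) / 4) * (2 * ⟪g.1, u⟫ * ⟪g.1, v⟫ + ‖g.1‖ ^ 2 * ⟪u, v⟫
        + 2 * ⟪b g.1 u, b g.1 v⟫))
    (fun _ _ _ => by simp only [inner_add_left, inner_add_right, map_add]; ring)
    (fun _ _ _ => by simp only [real_inner_smul_left, real_inner_smul_right, map_smul]; ring)
    (fun _ _ _ => by simp only [inner_add_right, map_add]; ring)
    (fun _ _ _ => by simp only [real_inner_smul_right, map_smul]; ring)

theorem X2sym_Ng [FiniteDimensional ℝ V₁] {b : V₁ →ₗ[ℝ] V₁ →ₗ[ℝ] V₂} {J : V₂ → V₁ →ₗ[ℝ] V₁}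
    (hskew : ∀ z z' : V₁, b z z' = - b z' z)
    (hJ : ∀ (t : V₂) (z z' : V₁), ⟪J t z, z'⟫ = ⟪b z z', t⟫) (u v : V₁) {g : V₁ × V₂}
    (hg : g ≠ (0, 0)) : X2sym b u v Ng g = gaugeHessian b J g u v := by
  rw [X2sym, Xd_Xd_Ng b u v hg, Xd_Xd_Ng b v u hg, Xd_innerAg, Xd_innerAg, hskew v u]
  simp only [gaugeHessian, LinearMap.mk₂_apply, innerAg_eq_inner_Ag hJ, inner_neg_left,
    real_inner_comm u v, real_inner_comm (b g.1 u)]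
  ring

theorem gaugeHessian_Ag_Ag {b : V₁ →ₗ[ℝ] V₁ →ₗ[ℝ] V₂} {J : V₂ → V₁ →ₗ[ℝ] V₁}
    (hskew : ∀ z z' : V₁, b z z' = - b z' z)
    (hJ : ∀ (t : V₂) (z z' : V₁), ⟪J t z, z'⟫ = ⟪b z z', t⟫)
    (hH : ∀ (t : V₂) (z : V₁), ‖J t z‖ = ‖t‖ * ‖z‖) {g : V₁ × V₂} (hg : g ≠ (0, 0)) :
    gaugeHessian b J g (Ag J g) (Ag J g) = 0 := by
  have ha : aF g = ‖g.1‖ ^ 4 + 16 * ‖g.2‖ ^ 2 := by rw [aF, psiF, chiF]; ring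
  have h4 : ‖(4 * ‖g.1‖ ^ 2 : ℝ)‖ = 4 * ‖g.1‖ ^ 2 := Real.norm_of_nonneg (by positivity)
  have hexp : aF g ^ (-(3 : ℝ) / 4) = aF g ^ (-(7 : ℝ) / 4) * aF g := by
    rw [← Real.rpow_add_one (aF_pos hg).ne']
    norm_num
  simp only [gaugeHessian, LinearMap.mk₂_apply, real_inner_self_eq_norm_sq, norm_Ag_sq hskew hJ hH,
    inner_fst_Ag hskew hJ, apply_fst_Ag hskew hJ hH, norm_smul, h4, hexp]
  linear_combination (-2 * aF g ^ (-(7 : ℝ) / 4) * ‖g.1‖ ^ 4 * aF g) * ha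

end GaugeHessian

theorem riesz_htype_N_infinity_harmonic_general {V₁ V₂ : Type*} [NormedAddCommGroup V₁] [InnerProductSpace ℝ V₁]
    [FiniteDimensional ℝ V₁] [NormedAddCommGroup V₂] [InnerProductSpace ℝ V₂]
    (b : V₁ →ₗ[ℝ] V₁ →ₗ[ℝ] V₂) (hskew : ∀ z z' : V₁, b z z' = - b z' z)
    (J : V₂ → V₁ →ₗ[ℝ] V₁) (hJ : ∀ (t : V₂) (z z' : V₁), ⟪J t z, z'⟫ = ⟪b z z', t⟫) (hH : ∀ (t : V₂) (z : V₁), ‖J t z‖ = ‖t‖ * ‖z‖) :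
    ∀ g : V₁ × V₂, g ≠ (0, 0) → hInfLap b Ng g = 0 := by
  intro g hg
  rw [hInfLap_eq_apply_of_Xd_eq_inner (gaugeHessian b J g) (aF g ^ (-(3 : ℝ) / 4) • Ag J g)
    (fun v => by rw [Xd_Ng b v hg, innerAg_eq_inner_Ag hJ, real_inner_smul_left])
    (fun u v => X2sym_Ng hskew hJ u v hg)]
  simp only [map_smul, LinearMap.smul_apply, gaugeHessian_Ag_Ag hskew hJ hH hg, smul_zero]

theorem riesz_htype_N_infinity_harmonic {V₁ V₂ : Type*} [NormedAddCommGroup V₁] [InnerProductSpace ℝ V₁]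
    [FiniteDimensional ℝ V₁] [NormedAddCommGroup V₂] [InnerProductSpace ℝ V₂]
    [FiniteDimensional ℝ V₂] (m k : ℕ) (hm : 1 ≤ m) (hk : 1 ≤ k)
    (hdV₁ : Module.finrank ℝ V₁ = m) (hdV₂ : Module.finrank ℝ V₂ = k)
    (b : V₁ →ₗ[ℝ] V₁ →ₗ[ℝ] V₂) (hskew : ∀ z z' : V₁, b z z' = - b z' z)
    (J : V₂ → V₁ →ₗ[ℝ] V₁) (hJ : ∀ (t : V₂) (z z' : V₁), ⟪J t z, z'⟫ = ⟪b z z', t⟫) (hH : ∀ (t : V₂) (z : V₁), ‖J t z‖ = ‖t‖ * ‖z‖) :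
    ∀ g : V₁ × V₂, g ≠ (0, 0) → hInfLap b Ng g = 0 :=
  riesz_htype_N_infinity_harmonic_general b hskew J hJ hH
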